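/- arXiv:1901.03070 — 5 statements merged into one kernel-verified Lean document; each statement's English description precedes it below -/
import Mathlib

section
/- Let G be an extra-special p-group of exponent p² with p an odd prime. Then G admits no AI-automorphism. -/
/-!
Write `α g = z_g * g⁻¹` with `z_g` central. Central factors drop out of commutators and
`⁅x⁻¹, y⁻¹⁆ = ⁅x, y⁆` when `⁅x, y⁆` is central, so `α` fixes `[G, G]` pointwise. On the other
hand `α (g ^ p) = z_g ^ p * g ^ (-p) = (g ^ p)⁻¹`, as the centre has order `p`. Since
`g ^ p ∈ [G, G]`, this forces `g ^ (2p) = 1` for every `g`, so `p² ∣ 2p`, impossible for odd `p`.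
-/

open scoped commutatorElement

open Subgroup

section CentralCommutators

variable {G : Type*} [Group G]

theorem commutatorElement_mul_left_of_mem_center {z : G} (hz : z ∈ center G) (a b : G) :
    ⁅z * a, b⁆ = ⁅a, b⁆ := by
  rw [commutatorElement_mul_left_eq_conj_mul, ← mem_center_iff.mp hz, mul_inv_cancel_right,
    Commute.commutator_eq (mem_center_iff.mp hz b).symm, mul_one]

theorem commutatorElement_mul_right_of_mem_center {z : G} (hz : z ∈ center G) (a b : G) :
    ⁅a, z * b⁆ = ⁅a, b⁆ := by
  rw [← commutatorElement_inv, commutatorElement_mul_left_of_mem_center hz, commutatorElement_inv]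

theorem commutatorElement_inv_inv_of_mem_center {x y : G} (h : ⁅x, y⁆ ∈ center G) :
    ⁅x⁻¹, y⁻¹⁆ = ⁅x, y⁆ := by
  have hconj (g : G) : g⁻¹ * ⁅x, y⁆ * g = ⁅x, y⁆ := by
    rw [mul_assoc, ← mem_center_iff.mp h g, inv_mul_cancel_left]
  rw [commutatorElement_inv_left, commutatorElement_inv_left, hconj, hconj]

theorem map_eq_self_of_mem_commutator {α : G →* G} (hα : ∀ g, α g * g ∈ center G)
    (hG : commutator G ≤ center G) {c : G} (hc : c ∈ commutator G) : α c = c := by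
  rw [commutator_eq_closure] at hc
  refine MonoidHom.eqOn_closure (g := MonoidHom.id G) ?_ hc
  rintro _ ⟨x, y, rfl⟩
  have hxy : ⁅x, y⁆ ∈ center G :=
    hG (commutator_def G ▸ commutator_mem_commutator (mem_top x) (mem_top y))
  rw [MonoidHom.id_apply, map_commutatorElement, ← mul_inv_cancel_right (α x) x,
    ← mul_inv_cancel_right (α y) y, commutatorElement_mul_left_of_mem_center (hα x),
    commutatorElement_mul_right_of_mem_center (hα y), commutatorElement_inv_inv_of_mem_center hxy]

theorem map_pow_eq_inv_of_mul_mem_center {α : G →* G} {g : G} (hg : α g * g ∈ center G) {n : ℕ}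
    (hn : (α g * g) ^ n = 1) : α (g ^ n) = (g ^ n)⁻¹ := by
  rw [map_pow, ← mul_inv_cancel_right (α g) g, Commute.mul_pow (mem_center_iff.mp hg g⁻¹).symm, hn,
    one_mul, inv_pow]

end CentralCommutators

theorem stmt11_general (p : ℕ) (hp : p.Prime) (hodd : Odd p)
    (G : Type*) [Group G] (h1 : Subgroup.center G = commutator G)
    (h3 : Nat.card (Subgroup.center G) = p)
    (h4 : ∀ g : G, g ^ p ∈ commutator G)
    (hexp : Monoid.exponent G = p ^ 2) :
    ¬ ∃ α : G ≃* G, ∀ g : G, α g * g ∈ commutator G := by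
  rintro ⟨α, hα⟩
  have hG : commutator G ≤ center G := h1.ge
  have hαcenter (g : G) : α g * g ∈ center G := hG (hα g)
  have hcenter (z : G) (hz : z ∈ center G) : z ^ p = 1 := by
    simpa [h3] using congrArg Subtype.val (pow_card_eq_one' (x := (⟨z, hz⟩ : center G)))
  have hpow (g : G) : g ^ (2 * p) = 1 := by
    have hfix : α (g ^ p) = g ^ p := map_eq_self_of_mem_commutator (α := α) hαcenter hG (h4 g)
    have hinv : α (g ^ p) = (g ^ p)⁻¹ :=
      map_pow_eq_inv_of_mul_mem_center (α := α) (hαcenter g) (hcenter _ (hαcenter g))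
    calc g ^ (2 * p) = α (g ^ p) * g ^ p := by rw [hfix, two_mul, pow_add]
      _ = 1 := by rw [hinv, inv_mul_cancel]
  have hdvd : p * p ∣ 2 * p := sq p ▸ hexp ▸ Monoid.exponent_dvd_of_forall_pow_eq_one hpow
  have hp2 : p = 2 :=
    (Nat.prime_dvd_prime_iff_eq hp Nat.prime_two).mp (Nat.dvd_of_mul_dvd_mul_right hp.pos hdvd)
  exact Nat.not_odd_iff_even.mpr (hp2 ▸ even_two) hodd

/-- An extra-special `p`-group of exponent `p²`, with `p` an odd prime, admits no
AI-automorphism. (Extra-special: a finite `p`-group with `Z(G) = [G,G] = Φ(G)`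
cyclic of order `p`; the Frattini condition is expressed by `g^p ∈ [G,G]`.) -/
theorem stmt11 (p : ℕ) (hp : p.Prime) (hodd : Odd p)
    (G : Type*) [Group G] [Finite G] (hpg : IsPGroup p G)
    (h1 : Subgroup.center G = commutator G)
    (h2 : IsCyclic (Subgroup.center G))
    (h3 : Nat.card (Subgroup.center G) = p)
    (h4 : ∀ g : G, g ^ p ∈ commutator G)
    (hexp : Monoid.exponent G = p ^ 2) :
    ¬ ∃ α : G ≃* G, ∀ g : G, α g * g ∈ commutator G :=
  stmt11_general p hp hodd G h1 h3 h4 hexp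
end

section
/- Let G = Cₙ ⋉ Cₘ = ⟨a,b ∣ bⁿ = 1, aᵐ = 1, a^b = aʳ⟩ with m odd, gcd(m, n(r−1)) = 1, rⁿ ≡ 1 (mod m), and G non-abelian. If G admits an AI-automorphism then r² ≡ 1 (mod m) and n is even. Conversely, if r² ≡ 1 (mod m) and n is even, the map (a,b) ↦ (a, b⁻¹) extends to an AI-automorphism of G. -/
/-!
Everything hinges on whether `b²` centralises `a`: since `b⁻² a b² = a ^ r²`, this is the
condition `r² ≡ 1 (mod m)`. An AI-automorphism `α` maps `a` to a generator `x` of `⟨a⟩ = [G, G]`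
and `b` to `c b⁻¹` with `c ∈ ⟨a⟩`; applying `α` to `b⁻¹ a b = a ^ r` gives
`b x b⁻¹ = x ^ r = b⁻¹ x b`, so `b²` centralises `x`, hence `a`. If `n` were odd, `b` would be a
power of `b²` and `G` would be abelian. Conversely, if `b²` centralises `a`, then
`G = ⟨a⟩ ⋊ ⟨b⟩` and conjugation by `h` and by `h⁻¹` agree on `⟨a⟩` for `h ∈ ⟨b⟩`, so
`(x, h) ↦ (x, h⁻¹)` is an automorphism of the semidirect product.
-/

open Subgroup
open scoped commutatorElement

section General

variable {G : Type*} [Group G]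

theorem commute_sq_iff_mul_mul_inv_eq {g x : G} :
    Commute (g ^ 2) x ↔ g * x * g⁻¹ = g⁻¹ * x * g := by
  rw [Commute, SemiconjBy, mul_inv_eq_iff_eq_mul, mul_assoc, mul_assoc, eq_inv_mul_iff_mul_eq, sq]
  simp only [mul_assoc]

theorem commute_of_commute_pow_of_coprime {g x : G} {k : ℕ} (hk : k.Coprime (orderOf g))
    (h : Commute (g ^ k) x) : Commute g x := by
  obtain ⟨l, hl⟩ := exists_pow_eq_self_of_coprime hk
  simpa [hl] using h.pow_left l

theorem commute_of_closure_pair_eq_top {a b : G} (hgen : closure {a, b} = ⊤) (hab : Commute a b)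
    (x y : G) : Commute x y := by
  have := isMulCommutative_closure (k := {a, b}) (by
    rintro x (rfl | rfl) y (rfl | rfl) <;> first | rfl | exact hab | exact hab.symm)
  exact setLike_mul_comm (s := closure {a, b}) (by simp [hgen]) (by simp [hgen])

theorem commute_sq_of_mem_zpowers {a b : G} (hsq : Commute (b ^ 2) a) :
    ∀ h ∈ zpowers b, ∀ x ∈ zpowers a, Commute (h ^ 2) x := by
  rintro _ ⟨k, rfl⟩ _ ⟨l, rfl⟩
  rw [← zpow_natCast, ← zpow_mul, mul_comm, zpow_mul, zpow_natCast]
  exact hsq.zpow_zpow k l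

theorem isComplement'_zpowers_of_coprime {a b : G} (ha : orderOf a ≠ 0) (hb : orderOf b ≠ 0)
    (hcard : Nat.card G = orderOf a * orderOf b) (hcop : (orderOf a).Coprime (orderOf b)) :
    (zpowers a).IsComplement' (zpowers b) := by
  have : Finite G := Nat.finite_of_card_ne_zero (hcard ▸ mul_ne_zero ha hb)
  exact isComplement'_of_coprime (by simp [hcard]) (by simpa using hcop)

open scoped IsMulCommutative in
theorem Subgroup.IsComplement'.exists_mulEquiv_fix_left_inv_right {N H : Subgroup G}
    [hN : N.Normal] [IsMulCommutative H] (hNH : N.IsComplement' H)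
    (hsq : ∀ h ∈ H, ∀ x ∈ N, Commute (h ^ 2) x) :
    ∃ α : G ≃* G, (∀ x ∈ N, α x = x) ∧ (∀ h ∈ H, α h = h⁻¹) ∧ ∀ g, α g * g ∈ N := by
  let φ : H →* MulAut N := N.normalizerMonoidHom.comp (inclusion (N.normalizer_eq_top ▸ le_top))
  let e : N ⋊[φ] H ≃* G := SemidirectProduct.mulEquivSubgroup hNH
  have he : ∀ p, e p = p.left * p.right := fun _ => rfl
  obtain ⟨σ, hσ⟩ : ∃ σ : MulAut (N ⋊[φ] H), ∀ p, e (σ p) = p.left * (p.right : G)⁻¹ :=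
    ⟨SemidirectProduct.congr (MulEquiv.refl N) (MulEquiv.inv H) fun h => by
      ext x; simpa [φ] using commute_sq_iff_mul_mul_inv_eq.mp (hsq h h.2 x x.2), fun _ => rfl⟩
  have hα : ∀ p, e.symm.trans (σ.trans e) (e p) = p.left * (p.right : G)⁻¹ := by
    simp [hσ]
  refine ⟨e.symm.trans (σ.trans e), fun x hx => ?_, fun h hh => ?_, fun g => ?_⟩
  · convert hα (SemidirectProduct.inl ⟨x, hx⟩) using 2 <;> simp [he]
  · convert hα (SemidirectProduct.inr ⟨h, hh⟩) using 2 <;> simp [he]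
  · obtain ⟨p, rfl⟩ := e.surjective g
    rw [hα, he]
    simpa [mul_assoc] using mul_mem p.left.2 (hN.conj_mem _ p.left.2 (p.right : G)⁻¹)

end General

section ConjEqPow

variable {G : Type*} [Group G] {a b : G} {r : ℕ}

theorem inv_mul_mul_eq_pow_of_mem_zpowers (hconj : b⁻¹ * a * b = a ^ r) {x : G}
    (hx : x ∈ zpowers a) : b⁻¹ * x * b = x ^ r := by
  obtain ⟨k, rfl⟩ := mem_zpowers_iff.mp hx
  have := conj_zpow (a := b⁻¹) (b := a) (i := k)
  rw [inv_inv] at this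
  rw [← this, hconj, ← zpow_natCast, ← zpow_natCast, ← zpow_mul, ← zpow_mul, mul_comm]

theorem commute_sq_iff_sq_modEq (hconj : b⁻¹ * a * b = a ^ r) :
    Commute (b ^ 2) a ↔ r ^ 2 ≡ 1 [MOD orderOf a] := by
  have h : (b ^ 2)⁻¹ * a * b ^ 2 = a ^ r ^ 2 := by
    rw [show (b ^ 2)⁻¹ * a * b ^ 2 = b⁻¹ * (b⁻¹ * a * b) * b by
      simp only [sq, mul_inv_rev, mul_assoc], hconj,
      inv_mul_mul_eq_pow_of_mem_zpowers hconj (pow_mem (mem_zpowers a) r), ← pow_mul, sq]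
  rw [← pow_eq_pow_iff_modEq, pow_one, ← h, mul_assoc, inv_mul_eq_iff_eq_mul, eq_comm]
  rfl

theorem normal_zpowers (hgen : closure {a, b} = ⊤) (hconj : b⁻¹ * a * b = a ^ r)
    (ha : IsOfFinOrder a) : (zpowers a).Normal := by
  have : Finite (zpowers a : Set G) := (finite_zpowers.mpr ha).to_subtype
  have hb : b⁻¹ ∈ normalizer (zpowers a : Set G) := mem_normalizer_fintype fun x hx => by
    rw [inv_inv, inv_mul_mul_eq_pow_of_mem_zpowers hconj hx]
    exact pow_mem hx r
  rw [← normalizer_eq_top_iff, eq_top_iff, ← hgen, closure_le]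
  rintro x (rfl | rfl)
  · exact le_normalizer (mem_zpowers x)
  · simpa using inv_mem hb

theorem commutator_eq_zpowers (hgen : closure {a, b} = ⊤) (hconj : b⁻¹ * a * b = a ^ r)
    (ha : IsOfFinOrder a) (hr : (r - 1).Coprime (orderOf a)) : commutator G = zpowers a := by
  have := normal_zpowers hgen hconj ha
  refine le_antisymm (Normal.commutator_le_of_self_sup_commutative_eq_top (H := zpowers b) ?_
    inferInstance) ?_
  · rw [← hgen, Set.insert_eq, Subgroup.closure_union, zpowers_eq_closure, zpowers_eq_closure]
  · have hmem : a ^ (r - 1) ∈ commutator G := by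
      rcases r with _ | r
      · simp
      · have : ⁅b⁻¹, a⁆ = a ^ r := by
          rw [commutatorElement_def, inv_inv, hconj, pow_succ, mul_inv_cancel_right]
        simpa [this, _root_.commutator_def] using
          commutator_mem_commutator (mem_top b⁻¹) (mem_top a)
    obtain ⟨k, hk⟩ := exists_pow_eq_self_of_coprime hr
    rw [zpowers_le, ← hk]
    exact pow_mem hmem k

theorem commute_sq_of_map_mem_zpowers (hconj : b⁻¹ * a * b = a ^ r) (ha : IsOfFinOrder a)
    (α : G ≃* G) (hαa : α a ∈ zpowers a) (hαb : α b * b ∈ zpowers a) : Commute (b ^ 2) a := by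
  obtain ⟨c, hc, hαb⟩ : ∃ c ∈ zpowers a, α b = c * b⁻¹ := ⟨_, hαb, by group⟩
  have hcx : Commute c (α a) := setLike_mul_comm hc hαa
  have hx : Commute (b ^ 2) (α a) := by
    have := congrArg α hconj
    rw [map_mul, map_mul, map_inv, map_pow, hαb, mul_inv_rev, inv_inv,
      show b * c⁻¹ * α a * (c * b⁻¹) = b * (c⁻¹ * α a * c) * b⁻¹ by group,
      hcx.inv_left.eq, inv_mul_cancel_right] at this
    rw [commute_sq_iff_mul_mul_inv_eq, this, inv_mul_mul_eq_pow_of_mem_zpowers hconj hαa]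
  have : Finite (zpowers a) := (finite_zpowers.mpr ha).to_subtype
  have hxa : zpowers (α a) = zpowers a := eq_of_le_of_card_ge (zpowers_le.mpr hαa)
    (by rw [Nat.card_zpowers, Nat.card_zpowers, α.orderOf_eq])
  obtain ⟨k, hk⟩ := mem_zpowers_iff.mp (hxa ▸ mem_zpowers a)
  exact hk ▸ hx.zpow_right k

end ConjEqPow

theorem stmt16_general (G : Type*) [Group G] (m n r : ℕ)
    (hm : Odd m)
    (hgcd : Nat.gcd m (n * (r - 1)) = 1)
    (a b : G)
    (hgen : Subgroup.closure {a, b} = ⊤)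
    (hoa : orderOf a = m) (hob : orderOf b = n)
    (hcard : Nat.card G = m * n)
    (hconj : b⁻¹ * a * b = a ^ r)
    (hnab : ∃ x y : G, x * y ≠ y * x) :
    ((∃ α : G ≃* G, ∀ g : G, α g * g ∈ commutator G) →
      (r ^ 2 ≡ 1 [MOD m] ∧ Even n)) ∧
    ((r ^ 2 ≡ 1 [MOD m]) → Even n →
      ∃ α : G ≃* G, α a = a ∧ α b = b⁻¹ ∧ ∀ g : G, α g * g ∈ commutator G) := by
  have ha : IsOfFinOrder a := orderOf_ne_zero_iff.mp (hoa ▸ hm.pos.ne')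
  have hba : ¬Commute b a := fun h => by
    obtain ⟨x, y, hxy⟩ := hnab
    exact hxy (commute_of_closure_pair_eq_top hgen h.symm x y)
  have hA : commutator G = zpowers a := commutator_eq_zpowers hgen hconj ha
    (hoa ▸ (Nat.Coprime.coprime_dvd_right (dvd_mul_left _ _) hgcd).symm)
  refine ⟨fun ⟨α, hα⟩ => ?_, fun hr2 _ => ?_⟩
  · have hsq := commute_sq_of_map_mem_zpowers hconj ha α
      ((mul_mem_cancel_right (mem_zpowers a)).mp (hA ▸ hα a)) (hA ▸ hα b)
    refine ⟨hoa ▸ (commute_sq_iff_sq_modEq hconj).mp hsq, ?_⟩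
    by_contra hn
    exact hba (commute_of_commute_pow_of_coprime
      (hob ▸ Nat.coprime_two_left.mpr (Nat.not_even_iff_odd.mp hn)) hsq)
  · have hn : n ≠ 0 := by
      rintro rfl
      obtain rfl : a = 1 := orderOf_eq_one_iff.mp (by simpa [hoa] using hgcd)
      exact hba (Commute.one_right b)
    have := normal_zpowers hgen hconj ha
    have hcompl := isComplement'_zpowers_of_coprime (hoa ▸ hm.pos.ne') (hob ▸ hn)
      (hoa ▸ hob ▸ hcard) (hoa ▸ hob ▸ Nat.Coprime.coprime_dvd_right (dvd_mul_right _ _) hgcd)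
    obtain ⟨α, hαa, hαb, hα⟩ := hcompl.exists_mulEquiv_fix_left_inv_right
      (commute_sq_of_mem_zpowers ((commute_sq_iff_sq_modEq hconj).mpr (hoa ▸ hr2)))
    exact ⟨α, hαa a (mem_zpowers a), hαb b (mem_zpowers b), fun g => hA ▸ hα g⟩

/-- Let `G = Cₙ ⋉ Cₘ = ⟨a,b ∣ bⁿ = aᵐ = 1, a^b = aʳ⟩` with `m` odd,
`gcd(m, n(r−1)) = 1`, `rⁿ ≡ 1 (mod m)`, and `G` non-abelian. If `G` admits an
AI-automorphism then `r² ≡ 1 (mod m)` and `n` is even; conversely if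
`r² ≡ 1 (mod m)` and `n` is even then `(a,b) ↦ (a, b⁻¹)` extends to an
AI-automorphism of `G`. -/
theorem stmt16 (G : Type*) [Group G] (m n r : ℕ)
    (hm : Odd m) (hrm : r < m)
    (hrn : r ^ n ≡ 1 [MOD m]) (hgcd : Nat.gcd m (n * (r - 1)) = 1)
    (a b : G)
    (hgen : Subgroup.closure {a, b} = ⊤)
    (hoa : orderOf a = m) (hob : orderOf b = n)
    (hcard : Nat.card G = m * n)
    (hconj : b⁻¹ * a * b = a ^ r)
    (hnab : ∃ x y : G, x * y ≠ y * x) :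
    ((∃ α : G ≃* G, ∀ g : G, α g * g ∈ commutator G) →
      (r ^ 2 ≡ 1 [MOD m] ∧ Even n)) ∧
    ((r ^ 2 ≡ 1 [MOD m]) → Even n →
      ∃ α : G ≃* G, α a = a ∧ α b = b⁻¹ ∧ ∀ g : G, α g * g ∈ commutator G) :=
  stmt16_general G m n r hm hgcd a b hgen hoa hob hcard hconj hnab
end

section
/- Let G be a group with AI-automorphism α. Define Φ_α : G ∗ G → G³ on the free product of two copies of G by sending an alternating word g₁h₁*⋯g_kh_k* (where h* denotes an element of the second copy) to (g₁⋯g_k, h₁⋯h_k, α(g₁h₁⋯g_kh_k)). Then the image of Φ_α is contained in K(G,3), and in fact equals K(G,3). -/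
/-- Let `α` be an AI-automorphism of `G` and `Φ_α : G ∗ G → G³` the homomorphism on
the free product determined by `g ↦ (g, 1, α g)` on the first copy and
`h ↦ (1, h, α h)` on the second copy. Then the image of `Φ_α` equals
`K(G,3) = {(x,y,z) : xyz ∈ [G,G]}`. -/
theorem stmt17 (G : Type*) [Group G] (α : G ≃* G)
    (hα : ∀ g : G, α g * g ∈ commutator G) :
    Set.range
        (Monoid.Coprod.lift
          ((MonoidHom.id G).prod ((1 : G →* G).prod α.toMonoidHom))
          ((1 : G →* G).prod ((MonoidHom.id G).prod α.toMonoidHom))) =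
      {x : G × G × G | x.1 * x.2.1 * x.2.2 ∈ commutator G} := by
  set Φ : Monoid.Coprod G G →* G × G × G := Monoid.Coprod.lift
          ((MonoidHom.id G).prod ((1 : G →* G).prod α.toMonoidHom))
          ((1 : G →* G).prod ((MonoidHom.id G).prod α.toMonoidHom)) with hΦ
  have hinl : ∀ g : G, Φ (Monoid.Coprod.inl g) = (g, 1, α g) := by
    intro g; simp [hΦ]
  have hinr : ∀ g : G, Φ (Monoid.Coprod.inr g) = (1, g, α g) := by
    intro g; simp [hΦ]
  have hone : ∀ g : G, Abelianization.of g = 1 ↔ g ∈ commutator G := by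
    intro g
    exact QuotientGroup.eq_one_iff g
  have hofα : ∀ g : G, Abelianization.of (α g) = (Abelianization.of g)⁻¹ := by
    intro g
    have h1 : Abelianization.of (α g * g) = 1 := (hone _).mpr (hα g)
    rw [map_mul] at h1
    exact eq_inv_of_mul_eq_one_left h1
  -- the auxiliary homomorphism to the abelianization
  set φ : G × G × G →* Abelianization G :=
    (Abelianization.of.comp (MonoidHom.fst G (G × G))) *
    (Abelianization.of.comp ((MonoidHom.fst G G).comp (MonoidHom.snd G (G × G)))) *
    (Abelianization.of.comp ((MonoidHom.snd G G).comp (MonoidHom.snd G (G × G)))) with hφ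
  have hφapp : ∀ x : G × G × G,
      φ x = Abelianization.of (x.1 * x.2.1 * x.2.2) := by
    intro x
    simp [hφ, map_mul]
  have hcomp : φ.comp Φ = 1 := by
    apply Monoid.Coprod.hom_ext <;> ext g <;>
      simp [hφapp, hinl, hinr, map_mul, hofα]
  ext x
  constructor
  · rintro ⟨w, rfl⟩
    have : φ (Φ w) = 1 := by
      have := DFunLike.congr_fun hcomp w
      simpa using this
    rw [hφapp] at this
    exact (hone _).mp this
  · rintro hx
    obtain ⟨g, h, k⟩ := x
    simp only [Set.mem_setOf_eq] at hx
    -- (1,1,e) is in the range for every e in the commutator subgroup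
    have hcomm : ∀ e ∈ commutator G, ((1, 1, e) : G × G × G) ∈ Φ.range := by
      have : commutator G ≤ Φ.range.comap
          ((1 : G →* G).prod ((1 : G →* G).prod (MonoidHom.id G))) := by
        rw [commutator_def, Subgroup.commutator_le]
        intro a _ b _
        refine Subgroup.mem_comap.mpr ?_
        refine ⟨Monoid.Coprod.inl (α.symm a) * Monoid.Coprod.inr (α.symm b) *
          (Monoid.Coprod.inl (α.symm a))⁻¹ * (Monoid.Coprod.inr (α.symm b))⁻¹, ?_⟩
        simp only [map_mul, map_inv, hinl, hinr]
        ext <;> simp [commutatorElement_def]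
      intro e he
      have := this he
      simpa using Subgroup.mem_comap.mp this
    have he : (α (g * h))⁻¹ * k ∈ commutator G := by
      rw [← hone, map_mul, map_inv, hofα, inv_inv]
      have hk : Abelianization.of (g * h * k) = 1 := (hone _).mpr hx
      simpa [map_mul, mul_assoc] using hk
    obtain ⟨w, hw⟩ := hcomm _ he
    refine ⟨Monoid.Coprod.inl g * Monoid.Coprod.inr h * w, ?_⟩
    rw [map_mul, map_mul, hinl, hinr, hw]
    ext <;> simp [map_mul] <;> group
end

section
/- Let G be an abelian group and define a group structure on G² × (G ∧ G) by (g₁,g₂;c)(h₁,h₂;d) = (g₁h₁, g₂h₂; c·d·(g₂ ∧ h₁)), where G ∧ G is the exterior square of G. This is a group (associativity and inverses hold), its center is {(a,b;c) : a,b ∈ Z^∧(G), c ∈ G ∧ G}, and the center is isomorphic to Z^∧(G)² × (G ∧ G). -/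
/-!
Expanding the pairing bilinearly reduces associativity to commutativity of `A`. Two elements
commute exactly when `g₂ ∧ h₁ = h₂ ∧ g₁`; testing against `(x, 1; 1)` and `(1, x; 1)` and using
that an alternating pairing is antisymmetric (`1 = ax ∧ ax = (a ∧ x)(x ∧ a)`) shows that
this holds for all `h` precisely when both `g₁` and `g₂` lie in the epicenter.
-/

namespace TwistedProduct

variable {G A : Type*} [CommGroup G] [CommGroup A]

lemma apply_swap_eq_inv (w : G →* G →* A) (halt : ∀ g, w g g = 1) (g h : G) :
    w h g = (w g h)⁻¹ := by
  have h₀ := halt (g * h)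
  simp only [map_mul, MonoidHom.mul_apply, halt, one_mul, mul_one] at h₀
  exact eq_inv_of_mul_eq_one_left h₀

lemma apply_eq_one_comm (w : G →* G →* A) (halt : ∀ g, w g g = 1) {g h : G} :
    w h g = 1 ↔ w g h = 1 := by
  rw [apply_swap_eq_inv w halt, inv_eq_one]

def mul (w : G →* G →* A) (p q : G × G × A) : G × G × A :=
  (p.1 * q.1, p.2.1 * q.2.1, p.2.2 * q.2.2 * w p.2.1 q.1)

variable (w : G →* G →* A)

lemma mul_assoc (p q r : G × G × A) : mul w (mul w p q) r = mul w p (mul w q r) := by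
  simp only [mul, Prod.mk.injEq, _root_.mul_assoc, true_and, map_mul, MonoidHom.mul_apply]
  simp only [_root_.mul_comm, mul_left_comm]

lemma one_mul (p : G × G × A) : mul w 1 p = p := by
  simp [mul]

lemma mul_one (p : G × G × A) : mul w p 1 = p := by
  simp [mul]

def inv (p : G × G × A) : G × G × A :=
  (p.1⁻¹, p.2.1⁻¹, p.2.2⁻¹ * w p.2.1 p.1)

lemma mul_inv (p : G × G × A) : mul w p (inv w p) = 1 := by
  simp only [mul, inv, map_inv, _root_.mul_inv_cancel, mul_inv_cancel_left]
  rfl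

lemma inv_mul (p : G × G × A) : mul w (inv w p) p = 1 := by
  simp only [mul, inv, map_inv, MonoidHom.inv_apply, inv_mul_cancel, inv_mul_cancel_comm,
    mul_inv_cancel]
  rfl

lemma mul_comm_iff (p q : G × G × A) :
    mul w p q = mul w q p ↔ w p.2.1 q.1 = w q.2.1 p.1 := by
  simp only [mul, Prod.mk.injEq, _root_.mul_comm p.1, _root_.mul_comm p.2.1,
    _root_.mul_comm p.2.2, mul_right_inj, true_and]

lemma forall_mul_comm_iff (halt : ∀ g, w g g = 1) (p : G × G × A) :
    (∀ q, mul w p q = mul w q p) ↔ (∀ x, w p.1 x = 1) ∧ (∀ x, w p.2.1 x = 1) := by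
  simp only [mul_comm_iff]
  constructor
  · intro hp
    refine ⟨fun x => ?_, fun x => ?_⟩
    · simpa [apply_eq_one_comm w halt] using (hp (1, x, 1)).symm
    · simpa using hp (x, 1, 1)
  · rintro ⟨h₁, h₂⟩ q
    rw [h₂, eq_comm, apply_eq_one_comm w halt, h₁]

def centerEquiv {P : G → Prop} :
    {p : G × G × A // P p.1 ∧ P p.2.1} ≃ {g // P g} × {g // P g} × A where
  toFun p := (⟨p.1.1, p.2.1⟩, ⟨p.1.2.1, p.2.2⟩, p.1.2.2)
  invFun t := ⟨(t.1, t.2.1, t.2.2), t.1.2, t.2.1.2⟩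
  left_inv _ := rfl
  right_inv _ := rfl

end TwistedProduct

open TwistedProduct in
theorem stmt18_general (G A : Type*) [CommGroup G] [CommGroup A]
    (w : G → G → A)
    (hbl : ∀ g g' h : G, w (g * g') h = w g h * w g' h)
    (hbr : ∀ g h h' : G, w g (h * h') = w g h * w g h')
    (halt : ∀ g : G, w g g = 1) :
    ∃ m : (G × G × A) → (G × G × A) → (G × G × A),
      (∀ p q : G × G × A,
        m p q = (p.1 * q.1, p.2.1 * q.2.1, p.2.2 * q.2.2 * w p.2.1 q.1)) ∧
      (∀ p q r : G × G × A, m (m p q) r = m p (m q r)) ∧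
      (∀ p : G × G × A, m (1, 1, 1) p = p ∧ m p (1, 1, 1) = p) ∧
      (∀ p : G × G × A, ∃ q, m p q = (1, 1, 1) ∧ m q p = (1, 1, 1)) ∧
      ({p : G × G × A | ∀ q, m p q = m q p} =
        {p : G × G × A | (∀ x : G, w p.1 x = 1) ∧ (∀ x : G, w p.2.1 x = 1)}) ∧
      Nonempty
        ({p : G × G × A // ∀ q, m p q = m q p} ≃
          {g : G // ∀ x : G, w g x = 1} × {g : G // ∀ x : G, w g x = 1} × A) := by
  let W : G →* G →* A :=
    MonoidHom.mk' (fun g => MonoidHom.mk' (w g) (hbr g)) fun g g' => by ext h; exact hbl g g' h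
  refine ⟨mul W, fun _ _ => rfl, mul_assoc W, fun p => ⟨one_mul W p, mul_one W p⟩,
    fun p => ⟨inv W p, mul_inv W p, inv_mul W p⟩, Set.ext (forall_mul_comm_iff W halt), ?_⟩
  exact ⟨(Equiv.subtypeEquivRight (forall_mul_comm_iff W halt)).trans
    (centerEquiv (P := fun g => ∀ x, w g x = 1))⟩

/-- Let `G` be an abelian group and `w : G × G → A` its exterior-square pairing
(bilinear, alternating, and universal among such pairings, so that `A = G ∧ G`).
Then the multiplication `(g₁,g₂;c)(h₁,h₂;d) = (g₁h₁, g₂h₂; c·d·(g₂ ∧ h₁))` on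
`G² × (G ∧ G)` is a group law, its center is
`{(a,b;c) : a,b ∈ Z^∧(G), c ∈ G ∧ G}` where `Z^∧(G) = {g : g ∧ x = 1 ∀x}`,
and the center is isomorphic (as a set, via a bijection) to
`Z^∧(G)² × (G ∧ G)`. -/
theorem stmt18 (G A : Type*) [CommGroup G] [CommGroup A]
    (w : G → G → A)
    (hbl : ∀ g g' h : G, w (g * g') h = w g h * w g' h)
    (hbr : ∀ g h h' : G, w g (h * h') = w g h * w g h')
    (halt : ∀ g : G, w g g = 1)
    (huniv : ∀ (B : Type) [CommGroup B] (f : G → G → B),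
      (∀ g g' h : G, f (g * g') h = f g h * f g' h) →
      (∀ g h h' : G, f g (h * h') = f g h * f g h') →
      (∀ g : G, f g g = 1) →
      ∃! φ : A →* B, ∀ g h : G, φ (w g h) = f g h) :
    ∃ m : (G × G × A) → (G × G × A) → (G × G × A),
      (∀ p q : G × G × A,
        m p q = (p.1 * q.1, p.2.1 * q.2.1, p.2.2 * q.2.2 * w p.2.1 q.1)) ∧
      (∀ p q r : G × G × A, m (m p q) r = m p (m q r)) ∧
      (∀ p : G × G × A, m (1, 1, 1) p = p ∧ m p (1, 1, 1) = p) ∧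
      (∀ p : G × G × A, ∃ q, m p q = (1, 1, 1) ∧ m q p = (1, 1, 1)) ∧
      ({p : G × G × A | ∀ q, m p q = m q p} =
        {p : G × G × A | (∀ x : G, w p.1 x = 1) ∧ (∀ x : G, w p.2.1 x = 1)}) ∧
      Nonempty
        ({p : G × G × A // ∀ q, m p q = m q p} ≃
          {g : G // ∀ x : G, w g x = 1} × {g : G // ∀ x : G, w g x = 1} × A) :=
  stmt18_general G A w hbl hbr halt
end

section
/- Let G = C_{2^{k₁}} × ⋯ × C_{2^{kₙ}} be a finite abelian 2-group such that the exterior square G ∧ G has exponent dividing 2. Then the two central extensions of G ∧ G by G² given by the cocycles γ₁((a,b),(d,e)) = b ∧ d and γ₂((a,b),(d,e)) = (a ∧ de)(b ∧ e) are isomorphic as groups; explicitly, writing a = ∏ xᵢ^{aᵢ}, the map (a,b;c) ↦ (a,b; c·∏_{i<j}(xᵢ ∧ xⱼ)^{aᵢaⱼ + bᵢbⱼ + aᵢbⱼ − aⱼbᵢ}) is a group isomorphism. -/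
/-- The abelian 2-group `G = C_{2^{k₁}} × ⋯ × C_{2^{kₙ}}`, written multiplicatively. -/
abbrev Gab (n : ℕ) (k : Fin n → ℕ) := Multiplicative (∀ i : Fin n, ZMod (2 ^ k i))

/-- The canonical generator `xᵢ` of the `i`-th cyclic factor of `Gab n k`. -/
def xgen (n : ℕ) (k : Fin n → ℕ) (i : Fin n) : Gab n k :=
  Multiplicative.ofAdd (Pi.single i 1)

/-- The `i`-th exponent `aᵢ` (as an integer) of `a = ∏ xᵢ^{aᵢ}` in `Gab n k`. -/
def expo {n : ℕ} {k : Fin n → ℕ} (a : Gab n k) (i : Fin n) : ℤ :=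
  ((Multiplicative.toAdd a) i).val

/-- The exponent `aᵢaⱼ + bᵢbⱼ + aᵢbⱼ − aⱼbᵢ` appearing in the isomorphism. -/
def expcoef {n : ℕ} {k : Fin n → ℕ} (a b : Gab n k) (i j : Fin n) : ℤ :=
  expo a i * expo a j + expo b i * expo b j + expo a i * expo b j - expo a j * expo b i

/-- Multiplication of the model of `τ(G)`: central extension of `G ∧ G` by `G²`
with cocycle `(a,b),(d,e) ↦ b ∧ d`. -/
def tauMul {n : ℕ} {k : Fin n → ℕ} {A : Type*} [CommGroup A]
    (w : Gab n k → Gab n k → A) (p q : Gab n k × Gab n k × A) :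
    Gab n k × Gab n k × A :=
  (p.1 * q.1, p.2.1 * q.2.1, p.2.2 * q.2.2 * w p.2.1 q.1)

/-- Multiplication of the model of `K̃(G,3)`: central extension of `G ∧ G` by `G²`
with cocycle `(a,b),(d,e) ↦ (a ∧ de)(b ∧ e)`. -/
def ktMul {n : ℕ} {k : Fin n → ℕ} {A : Type*} [CommGroup A]
    (w : Gab n k → Gab n k → A) (p q : Gab n k × Gab n k × A) :
    Gab n k × Gab n k × A :=
  (p.1 * q.1, p.2.1 * q.2.1,
    p.2.2 * q.2.2 * w p.1 (q.1 * q.2.1) * w p.2.1 q.2.1)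

/-- The map `ψ : (a,b;c) ↦ (a,b; c·∏_{i<j}(xᵢ ∧ xⱼ)^{aᵢaⱼ + bᵢbⱼ + aᵢbⱼ − aⱼbᵢ})`. -/
def psiMap {n : ℕ} {k : Fin n → ℕ} {A : Type*} [CommGroup A]
    (w : Gab n k → Gab n k → A) (p : Gab n k × Gab n k × A) :
    Gab n k × Gab n k × A :=
  (p.1, p.2.1, p.2.2 *
    Finset.univ.prod (fun i : Fin n =>
      (Finset.filter (fun j : Fin n => i < j) Finset.univ).prod
        (fun j => w (xgen n k i) (xgen n k j) ^ expcoef p.1 p.2.1 i j)))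

section helper
variable {n : ℕ} {k : Fin n → ℕ} {A : Type*} [CommGroup A]

lemma zpow_congr_mod2 (hA : ∀ z : A, z * z = 1) (z : A) {m m' : ℤ}
    (h : (m : ZMod 2) = (m' : ZMod 2)) : z ^ m = z ^ m' := by
  have h2 : m ≡ m' [ZMOD 2] := (ZMod.intCast_eq_intCast_iff _ _ _).1 h
  obtain ⟨t, ht⟩ := Int.ModEq.dvd h2
  have hm : m = m' + (-t + -t) := by linarith
  rw [hm, zpow_add, zpow_add, hA (z ^ (-t)), mul_one]

lemma gen_decomp (g : Gab n k) : g = ∏ i, xgen n k i ^ expo g i := by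
  refine Multiplicative.toAdd.injective ?_
  rw [toAdd_prod]
  simp only [toAdd_zpow, xgen, toAdd_ofAdd]
  have hone : ∀ i : Fin n, (expo g i • Pi.single i (1 : ZMod (2 ^ k i)) : ∀ j, ZMod (2 ^ k j))
      = Pi.single i (Multiplicative.toAdd g i) := by
    intro i
    haveI : NeZero (2 ^ k i) := ⟨pow_ne_zero _ two_ne_zero⟩
    rw [← Pi.single_smul, Int.smul_one_eq_cast]
    have hv : (((Multiplicative.toAdd g i).val : ℤ) : ZMod (2 ^ k i)) = Multiplicative.toAdd g i := by
      push_cast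
      exact ZMod.natCast_rightInverse _
    simp only [expo]
    rw [hv]
  rw [Finset.sum_congr rfl fun i _ => hone i, Finset.univ_sum_single]

lemma expo_mul_cast (g h : Gab n k) (i : Fin n) :
    ((expo (g * h) i : ZMod 2)) = (expo g i : ZMod 2) + (expo h i : ZMod 2) := by
  haveI : NeZero (2 ^ k i) := ⟨pow_ne_zero _ two_ne_zero⟩
  rcases Nat.eq_zero_or_pos (k i) with h0 | hpos
  · have hz : ∀ x : Gab n k, expo x i = 0 := by
      intro x
      have hlt : (Multiplicative.toAdd x i).val < 2 ^ k i := ZMod.val_lt _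
      have e1 : (2 : ℕ) ^ k i = 1 := by rw [h0, pow_zero]
      have h1 : (Multiplicative.toAdd x i).val < 1 := Nat.lt_of_lt_of_eq hlt e1
      simp only [expo]
      omega
    simp [hz]
  · have hdvd : 2 ∣ 2 ^ k i := dvd_pow_self 2 hpos.ne'
    have key : ∀ a : ℕ, ((a % 2 ^ k i : ℕ) : ZMod 2) = (a : ZMod 2) := by
      intro a
      conv_rhs => rw [← Nat.mod_add_div a (2 ^ k i)]
      rw [Nat.cast_add, Nat.cast_mul, (ZMod.natCast_eq_zero_iff _ 2).2 hdvd,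
        zero_mul, add_zero]
    simp only [expo, toAdd_mul, Pi.add_apply, ZMod.val_add]
    rw [Int.cast_natCast, key, Nat.cast_add]
    push_cast
    ring

variable (w : Gab n k → Gab n k → A)
  (hbl : ∀ g g' h : Gab n k, w (g * g') h = w g h * w g' h)
  (hbr : ∀ g h h' : Gab n k, w g (h * h') = w g h * w g h')
  (halt : ∀ g : Gab n k, w g g = 1)
  (hA : ∀ z : A, z * z = 1)

include hbl hbr halt hA in
lemma w_symm (g h : Gab n k) : w h g = w g h := by
  have h1 := halt (g * h)
  rw [hbl, hbr, hbr, halt, halt, one_mul, mul_one] at h1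
  have h2 : w h g = (w g h)⁻¹ := (inv_eq_of_mul_eq_one_right h1).symm
  have h3 : (w g h)⁻¹ = w g h := inv_eq_of_mul_eq_one_right (hA (w g h))
  rw [h2, h3]

include hbl hbr in
lemma w_expand (g h : Gab n k) :
    w g h = ∏ i, ∏ j, w (xgen n k i) (xgen n k j) ^ (expo g i * expo h j) := by
  have L : ∀ h' : Gab n k, w (∏ i, xgen n k i ^ expo g i) h'
      = ∏ i, w (xgen n k i) h' ^ expo g i := by
    intro h'
    let φ : Gab n k →* A := MonoidHom.mk' (fun x => w x h') (fun x y => hbl x y h')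
    calc w (∏ i, xgen n k i ^ expo g i) h' = φ (∏ i, xgen n k i ^ expo g i) := rfl
      _ = ∏ i, φ (xgen n k i ^ expo g i) := map_prod φ _ _
      _ = ∏ i, w (xgen n k i) h' ^ expo g i := by
          refine Finset.prod_congr rfl fun i _ => ?_
          exact map_zpow φ _ _
  have R : ∀ i : Fin n, w (xgen n k i) h
      = ∏ j, w (xgen n k i) (xgen n k j) ^ expo h j := by
    intro i
    let ψ : Gab n k →* A := MonoidHom.mk' (fun y => w (xgen n k i) y) (fun x y => hbr _ x y)
    calc w (xgen n k i) h = ψ (∏ j, xgen n k j ^ expo h j) := by rw [← gen_decomp h]; rfl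
      _ = ∏ j, ψ (xgen n k j ^ expo h j) := map_prod ψ _ _
      _ = ∏ j, w (xgen n k i) (xgen n k j) ^ expo h j := by
          refine Finset.prod_congr rfl fun j _ => ?_
          exact map_zpow ψ _ _
  conv_lhs => rw [gen_decomp g, L h]
  refine Finset.prod_congr rfl fun i _ => ?_
  rw [R i, ← Finset.prod_zpow]
  refine Finset.prod_congr rfl fun j _ => ?_
  rw [← zpow_mul, mul_comm (expo h j)]

include hbl hbr halt hA in
lemma w_expand_lt (g h : Gab n k) :
    w g h = ∏ i, ∏ j ∈ Finset.filter (fun j : Fin n => i < j) Finset.univ,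
      w (xgen n k i) (xgen n k j) ^ (expo g i * expo h j + expo g j * expo h i) := by
  rw [w_expand w hbl hbr g h]
  have split : ∀ i : Fin n, (∏ j, w (xgen n k i) (xgen n k j) ^ (expo g i * expo h j)) =
      (∏ j ∈ Finset.filter (fun j : Fin n => i < j) Finset.univ,
        w (xgen n k i) (xgen n k j) ^ (expo g i * expo h j)) *
      (∏ j ∈ Finset.filter (fun j : Fin n => j < i) Finset.univ,
        w (xgen n k i) (xgen n k j) ^ (expo g i * expo h j)) := by
    intro i
    rw [← Finset.prod_filter_mul_prod_filter_not Finset.univ (fun j => i < j)]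
    congr 1
    have hset : Finset.filter (fun j : Fin n => ¬ i < j) Finset.univ
        = insert i (Finset.filter (fun j : Fin n => j < i) Finset.univ) := by
      ext j
      simp only [Finset.mem_filter, Finset.mem_univ, true_and, Finset.mem_insert]
      constructor
      · intro hj
        rcases lt_or_eq_of_le (le_of_not_gt hj) with h' | h'
        · exact Or.inr h'
        · exact Or.inl h'
      · rintro (rfl | hj)
        · exact lt_irrefl _
        · exact not_lt_of_gt hj
    rw [hset, Finset.prod_insert (by simp), halt, one_zpow, one_mul]
  rw [Finset.prod_congr rfl fun i _ => split i, Finset.prod_mul_distrib]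
  have swap : (∏ i, ∏ j ∈ Finset.filter (fun j : Fin n => j < i) Finset.univ,
        w (xgen n k i) (xgen n k j) ^ (expo g i * expo h j))
      = ∏ i, ∏ j ∈ Finset.filter (fun j : Fin n => i < j) Finset.univ,
        w (xgen n k i) (xgen n k j) ^ (expo g j * expo h i) := by
    rw [Finset.prod_comm' (t' := Finset.univ)
      (s' := fun j => Finset.filter (fun i : Fin n => j < i) Finset.univ)
      (by intro x y; simp)]
    refine Finset.prod_congr rfl fun j _ => Finset.prod_congr rfl fun i _ => ?_
    rw [w_symm w hbl hbr halt hA]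
  rw [swap, ← Finset.prod_mul_distrib]
  refine Finset.prod_congr rfl fun i _ => ?_
  rw [← Finset.prod_mul_distrib]
  refine Finset.prod_congr rfl fun j _ => ?_
  rw [← zpow_add]

end helper

/-- Let `G = C_{2^{k₁}} × ⋯ × C_{2^{kₙ}}` be a finite abelian 2-group and
`w : G × G → G ∧ G` the exterior-square pairing (bilinear, alternating, image
generating `G ∧ G`), with `G ∧ G` of exponent dividing 2. Then the explicit map
`ψ` is a group isomorphism between the two central extensions of `G ∧ G` by `G²`
given by the cocycles `γ₁((a,b),(d,e)) = b ∧ d` and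
`γ₂((a,b),(d,e)) = (a ∧ de)(b ∧ e)`. -/
theorem stmt19 (n : ℕ) (k : Fin n → ℕ) (A : Type*) [CommGroup A]
    (w : Gab n k → Gab n k → A)
    (hbl : ∀ g g' h : Gab n k, w (g * g') h = w g h * w g' h)
    (hbr : ∀ g h h' : Gab n k, w g (h * h') = w g h * w g h')
    (halt : ∀ g : Gab n k, w g g = 1)
    (hgen : Subgroup.closure {z : A | ∃ g h : Gab n k, z = w g h} = ⊤)
    (hA : ∀ z : A, z * z = 1) :
    Function.Bijective (psiMap w) ∧
    ∀ p q : Gab n k × Gab n k × A,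
      psiMap w (tauMul w p q) = ktMul w (psiMap w p) (psiMap w q) := by
  constructor
  · have hinv : Function.Involutive (psiMap w) := by
      rintro ⟨a, b, c⟩
      simp only [psiMap, Prod.mk.injEq, true_and]
      rw [mul_assoc, hA, mul_one]
    exact hinv.bijective
  · rintro ⟨a, b, c⟩ ⟨d, e, f⟩
    simp only [psiMap, tauMul, ktMul, Prod.mk.injEq, true_and]
    have merge : ∀ F G : Fin n → Fin n → ℤ,
        (∏ i, ∏ j ∈ Finset.filter (fun j : Fin n => i < j) Finset.univ,
          w (xgen n k i) (xgen n k j) ^ F i j) *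
        (∏ i, ∏ j ∈ Finset.filter (fun j : Fin n => i < j) Finset.univ,
          w (xgen n k i) (xgen n k j) ^ G i j)
        = ∏ i, ∏ j ∈ Finset.filter (fun j : Fin n => i < j) Finset.univ,
          w (xgen n k i) (xgen n k j) ^ (F i j + G i j) := by
      intro F G
      rw [← Finset.prod_mul_distrib]
      refine Finset.prod_congr rfl fun i _ => ?_
      rw [← Finset.prod_mul_distrib]
      refine Finset.prod_congr rfl fun j _ => (zpow_add _ _ _).symm
    have key : w b d *
        (∏ i, ∏ j ∈ Finset.filter (fun j : Fin n => i < j) Finset.univ,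
          w (xgen n k i) (xgen n k j) ^ expcoef (a * d) (b * e) i j)
        = (∏ i, ∏ j ∈ Finset.filter (fun j : Fin n => i < j) Finset.univ,
            w (xgen n k i) (xgen n k j) ^ expcoef a b i j) *
          (∏ i, ∏ j ∈ Finset.filter (fun j : Fin n => i < j) Finset.univ,
            w (xgen n k i) (xgen n k j) ^ expcoef d e i j) *
          w a (d * e) * w b e := by
      rw [w_expand_lt w hbl hbr halt hA b d, w_expand_lt w hbl hbr halt hA a (d * e),
        w_expand_lt w hbl hbr halt hA b e]
      rw [merge, merge, merge, merge]
      refine Finset.prod_congr rfl fun i _ => Finset.prod_congr rfl fun j _ =>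
        zpow_congr_mod2 hA _ ?_
      have h2 : (2 : ZMod 2) = 0 := rfl
      simp only [expcoef]
      push_cast
      simp only [expo_mul_cast]
      linear_combination (((expo d i : ℤ) : ZMod 2) * ((expo b j : ℤ) : ZMod 2)
        - ((expo a j : ℤ) : ZMod 2) * ((expo e i : ℤ) : ZMod 2)) * h2
    calc c * f * w b d *
          (∏ i, ∏ j ∈ Finset.filter (fun j : Fin n => i < j) Finset.univ,
            w (xgen n k i) (xgen n k j) ^ expcoef (a * d) (b * e) i j)
        = (c * f) * (w b d *
          (∏ i, ∏ j ∈ Finset.filter (fun j : Fin n => i < j) Finset.univ,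
            w (xgen n k i) (xgen n k j) ^ expcoef (a * d) (b * e) i j)) := by
          rw [mul_assoc, mul_assoc]
      _ = (c * f) * ((∏ i, ∏ j ∈ Finset.filter (fun j : Fin n => i < j) Finset.univ,
            w (xgen n k i) (xgen n k j) ^ expcoef a b i j) *
          (∏ i, ∏ j ∈ Finset.filter (fun j : Fin n => i < j) Finset.univ,
            w (xgen n k i) (xgen n k j) ^ expcoef d e i j) *
          w a (d * e) * w b e) := by rw [key]
      _ = c * (∏ i, ∏ j ∈ Finset.filter (fun j : Fin n => i < j) Finset.univ,
            w (xgen n k i) (xgen n k j) ^ expcoef a b i j) *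
          (f * (∏ i, ∏ j ∈ Finset.filter (fun j : Fin n => i < j) Finset.univ,
            w (xgen n k i) (xgen n k j) ^ expcoef d e i j)) *
          w a (d * e) * w b e := by ac_rfl
end
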